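/- In a 1-2 metric space with no pair of twins and no universal line, on n points, the size of each equivalence class of the relation 'determining the same line' on unordered pairs of distinct points is at most max{(n-1)/2, 4}. -/

import Mathlib

def line {α : Type*} [MetricSpace α] (u v : α) : Set α :=
  {p | dist p u + dist u v = dist p v ∨ dist u p + dist p v = dist u v ∨
       dist u v + dist v p = dist u p}

def OneTwo (α : Type*) [MetricSpace α] : Prop :=
  ∀ x y : α, x ≠ y → dist x y = 1 ∨ dist x y = 2

def Twins {α : Type*} [MetricSpace α] (u v : α) : Prop :=
  dist u v = 2 ∧ ∀ w : α, w ≠ u → w ≠ v → dist u w = dist v w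

def linesOf (α : Type*) [MetricSpace α] : Set (Set α) :=
  {L | ∃ u v : α, u ≠ v ∧ L = line u v}

/-! Call a pair of points a 1-pair or a 2-pair according to its distance. Two pairs of the same
kind determining the same line are disjoint: two 2-pairs cannot share a point at all, and if two
1-pairs `ab`, `ac` did, then `b` and `c` would be twins. A 1-pair and a 2-pair determining the same
line must meet. So if the class of `L` contains pairs of both kinds, the pairs of each kind are
disjoint and all meet one fixed pair of the other kind, which leaves at most `2 + 2` of them;
otherwise the class consists of disjoint pairs inside `L ≠ α`, so twice its size is at most
`n - 1`. -/

theorem Set.mul_ncard_le_of_pairwiseDisjoint {ι α : Type*} {F : Set ι} {f : ι → Set α}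
    {S : Set α} {k : ℕ} (hS : S.Finite) (hF : F.PairwiseDisjoint f)
    (hk : ∀ i ∈ F, k ≤ (f i ∩ S).ncard) : k * F.ncard ≤ S.ncard := by
  rcases F.finite_or_infinite with hFfin | hFinf
  · calc k * F.ncard = ∑ i ∈ hFfin.toFinset, k := by
          rw [Finset.sum_const, smul_eq_mul, mul_comm, Set.ncard_eq_toFinset_card F hFfin]
      _ ≤ ∑ i ∈ hFfin.toFinset, (f i ∩ S).ncard :=
        Finset.sum_le_sum fun i hi => hk i (hFfin.mem_toFinset.mp hi)
      _ = (⋃ i ∈ F, f i ∩ S).ncard := by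
        rw [hFfin.ncard_biUnion (fun _ _ => hS.inter_of_right _)
          (hF.mono fun _ => Set.inter_subset_left), finsum_mem_eq_finite_toFinset_sum _ hFfin]
      _ ≤ S.ncard := Set.ncard_le_ncard (Set.iUnion₂_subset fun _ _ => Set.inter_subset_right) hS
  · simp [hFinf.ncard]

def pairDist {α : Type*} [PseudoMetricSpace α] : Sym2 α → ℝ :=
  Sym2.lift ⟨dist, dist_comm⟩

def IsLineClass {α : Type*} [MetricSpace α] (C : Set (Sym2 α)) (L : Set α) : Prop :=
  ∀ x y : α, s(x, y) ∈ C ↔ x ≠ y ∧ line x y = L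

theorem left_mem_line {α : Type*} [MetricSpace α] (u v : α) : u ∈ line u v := by
  simp [line]

theorem right_mem_line {α : Type*} [MetricSpace α] (u v : α) : v ∈ line u v := by
  simp [line]

namespace OneTwo

variable {α : Type*} [MetricSpace α]

theorem mem_line_iff (h12 : OneTwo α) {u v p : α} (huv : u ≠ v) (hpu : p ≠ u) (hpv : p ≠ v) :
    p ∈ line u v ↔ dist u v = 1 ∧ dist p u ≠ dist p v ∨
      dist u v = 2 ∧ dist p u = 1 ∧ dist p v = 1 := by
  simp only [line, Set.mem_ofPred_eq, dist_comm u p, dist_comm v p]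
  rcases h12 u v huv with h | h <;> rcases h12 p u hpu with h' | h' <;>
    rcases h12 p v hpv with h'' | h'' <;> rw [h, h', h''] <;> norm_num

theorem line_ne_of_dist_eq (h12 : OneTwo α) (hnt : ∀ u v : α, ¬ Twins u v) {a b c : α}
    (hab : a ≠ b) (hac : a ≠ c) (hbc : b ≠ c) (hd : dist a b = dist a c) :
    line a b ≠ line a c := by
  intro hL
  have hc : c ∈ line a b := hL ▸ right_mem_line a c
  rw [h12.mem_line_iff hab hac.symm hbc.symm, dist_comm c a, ← hd] at hc
  rcases h12 a b hab with hab1 | hab2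
  · have hbc2 : dist b c = 2 := by
      rcases h12 c b hbc.symm with h | h
      · simp [hab1, h] at hc
      · rw [dist_comm, h]
    refine hnt b c ⟨hbc2, fun w hwb hwc => ?_⟩
    rcases eq_or_ne w a with rfl | hwa
    · rw [dist_comm b, hd, dist_comm]
    have hw : w ∈ line a b ↔ w ∈ line a c := by rw [hL]
    rw [h12.mem_line_iff hab hwa hwb, h12.mem_line_iff hac hwa hwc, ← hd, hab1] at hw
    rw [dist_comm b, dist_comm c]
    rcases h12 w a hwa with h | h <;> rcases h12 w b hwb with h' | h' <;>
      rcases h12 w c hwc with h'' | h'' <;> simp [h, h', h''] at hw ⊢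
  · simp [hab2] at hc

theorem line_ne_of_dist_ne (h12 : OneTwo α) {a b c e : α} (hab : a ≠ b) (hce : c ≠ e)
    (hac : a ≠ c) (hae : a ≠ e) (hbc : b ≠ c) (hbe : b ≠ e)
    (h2 : dist a b = 2) (h1 : dist c e = 1) : line a b ≠ line c e := by
  intro hL
  have hc : c ∈ line a b := hL ▸ left_mem_line c e
  have he : e ∈ line a b := hL ▸ right_mem_line c e
  have ha : a ∈ line c e := hL ▸ left_mem_line a b
  rw [h12.mem_line_iff hab hac.symm hbc.symm, h2] at hc
  rw [h12.mem_line_iff hab hae.symm hbe.symm, h2] at he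
  rw [h12.mem_line_iff hce hac hae, h1] at ha
  norm_num at hc he ha
  rw [dist_comm a c, dist_comm a e, hc.1, he.1] at ha
  exact ha rfl

end OneTwo

namespace IsLineClass

variable {α : Type*} [MetricSpace α] {L : Set α} {C : Set (Sym2 α)}

theorem pairDist_eq_one_or_two (hC : IsLineClass C L) (h12 : OneTwo α) {s : Sym2 α}
    (hs : s ∈ C) : pairDist s = 1 ∨ pairDist s = 2 := by
  induction s using Sym2.ind with
  | _ x y => exact h12 x y ((hC x y).mp hs).1

theorem ncard_coe_eq_two (hC : IsLineClass C L) {s : Sym2 α} (hs : s ∈ C) :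
    (s : Set α).ncard = 2 := by
  induction s using Sym2.ind with
  | _ x y => exact Sym2.coe_mk (x := x) (y := y) ▸ Set.ncard_pair ((hC x y).mp hs).1

theorem coe_subset (hC : IsLineClass C L) {s : Sym2 α} (hs : s ∈ C) : (s : Set α) ⊆ L := by
  induction s using Sym2.ind with
  | _ x y =>
    rw [Sym2.coe_mk, ← ((hC x y).mp hs).2]
    exact Set.pair_subset (left_mem_line x y) (right_mem_line x y)

theorem disjoint_of_pairDist_eq (hC : IsLineClass C L) (h12 : OneTwo α)
    (hnt : ∀ u v : α, ¬ Twins u v) {s t : Sym2 α} (hs : s ∈ C) (ht : t ∈ C) (hst : s ≠ t)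
    (hd : pairDist s = pairDist t) : Disjoint (s : Set α) t := by
  refine Set.disjoint_left.mpr fun p hps hpt => ?_
  obtain ⟨q, rfl⟩ := Sym2.mem_iff_exists.mp hps
  obtain ⟨r, rfl⟩ := Sym2.mem_iff_exists.mp hpt
  obtain ⟨hpq, hLq⟩ := (hC p q).mp hs
  obtain ⟨hpr, hLr⟩ := (hC p r).mp ht
  have hqr : q ≠ r := by rintro rfl; exact hst rfl
  exact h12.line_ne_of_dist_eq hnt hpq hpr hqr hd (hLq.trans hLr.symm)

theorem inter_nonempty_of_pairDist_ne (hC : IsLineClass C L) (h12 : OneTwo α) {s t : Sym2 α}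
    (hs : s ∈ C) (ht : t ∈ C) (hd : pairDist s ≠ pairDist t) : ((s : Set α) ∩ t).Nonempty := by
  wlog hs2 : pairDist s = 2 generalizing s t
  · rw [Set.inter_comm]
    refine this ht hs hd.symm ?_
    rcases hC.pairDist_eq_one_or_two h12 hs with h | h <;>
      rcases hC.pairDist_eq_one_or_two h12 ht with h' | h' <;> simp_all
  have ht1 : pairDist t = 1 := (hC.pairDist_eq_one_or_two h12 ht).resolve_right (hs2 ▸ hd.symm)
  induction s using Sym2.ind with | _ a b =>
  induction t using Sym2.ind with | _ c e =>
  obtain ⟨hab, hLab⟩ := (hC a b).mp hs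
  obtain ⟨hce, hLce⟩ := (hC c e).mp ht
  by_contra hempty
  obtain ⟨⟨hac, hae⟩, hbc, hbe⟩ : (a ≠ c ∧ a ≠ e) ∧ b ≠ c ∧ b ≠ e := by
    simpa [Set.Nonempty] using hempty
  exact h12.line_ne_of_dist_ne hab hce hac hae hbc hbe hs2 ht1 (hLab.trans hLce.symm)

theorem ncard_pairDist_eq_le_two (hC : IsLineClass C L) (h12 : OneTwo α)
    (hnt : ∀ u v : α, ¬ Twins u v) {v : Sym2 α} {d : ℝ} (hv : v ∈ C) (hd : d ≠ pairDist v) :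
    {w ∈ C | pairDist w = d}.ncard ≤ 2 := by
  have hv2 : (v : Set α).ncard = 2 := hC.ncard_coe_eq_two hv
  have hvfin : (v : Set α).Finite := Set.finite_of_ncard_ne_zero (by omega)
  have hmeet : ∀ w ∈ {w ∈ C | pairDist w = d}, 1 ≤ ((w : Set α) ∩ v).ncard :=
    fun w hw => (Set.ncard_pos (hvfin.inter_of_right _)).mpr
      (hC.inter_nonempty_of_pairDist_ne h12 hw.1 hv (hw.2 ▸ hd))
  simpa [hv2] using Set.mul_ncard_le_of_pairwiseDisjoint hvfin
    (fun w hw w' hw' hww' => hC.disjoint_of_pairDist_eq h12 hnt hw.1 hw'.1 hww'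
      (hw.2.trans hw'.2.symm)) hmeet

theorem ncard_le_four [Finite α] (hC : IsLineClass C L) (h12 : OneTwo α)
    (hnt : ∀ u v : α, ¬ Twins u v) {s t : Sym2 α} (hs : s ∈ C) (ht : t ∈ C)
    (hst : pairDist s ≠ pairDist t) : C.ncard ≤ 4 := by
  have hcover : C ⊆ {w ∈ C | pairDist w = pairDist s} ∪ {w ∈ C | pairDist w = pairDist t} := by
    intro w hw
    rcases hC.pairDist_eq_one_or_two h12 hw with h | h <;>
      rcases hC.pairDist_eq_one_or_two h12 hs with h' | h' <;>
      rcases hC.pairDist_eq_one_or_two h12 ht with h'' | h'' <;> simp_all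
  calc C.ncard ≤ _ := Set.ncard_le_ncard hcover (Set.toFinite _)
    _ ≤ _ := Set.ncard_union_le _ _
    _ ≤ 2 + 2 := add_le_add (hC.ncard_pairDist_eq_le_two h12 hnt ht hst)
      (hC.ncard_pairDist_eq_le_two h12 hnt hs hst.symm)

theorem two_mul_ncard_lt_card [Finite α] (hC : IsLineClass C L) (h12 : OneTwo α)
    (hnt : ∀ u v : α, ¬ Twins u v) (hL : L ≠ Set.univ) {d : ℝ}
    (hd : ∀ s ∈ C, pairDist s = d) : 2 * C.ncard < Nat.card α :=
  calc 2 * C.ncard ≤ L.ncard := by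
        refine Set.mul_ncard_le_of_pairwiseDisjoint (Set.toFinite L)
          (fun s hs t ht hst => hC.disjoint_of_pairDist_eq h12 hnt hs ht hst
            ((hd s hs).trans (hd t ht).symm)) fun s hs => ?_
        rw [Set.inter_eq_left.mpr (hC.coe_subset hs), hC.ncard_coe_eq_two hs]
    _ < Nat.card α := Set.ncard_lt_card hL

end IsLineClass

theorem stmt10 {α : Type*} [MetricSpace α] [Fintype α] (h12 : OneTwo α)
    (hnt : ∀ u v : α, ¬ Twins u v)
    (hnu : ¬ ∃ u v : α, u ≠ v ∧ line u v = Set.univ)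
    (L : Set α) (C : Set (Sym2 α))
    (hclass : ∀ x y : α, Sym2.mk x y ∈ C ↔ (x ≠ y ∧ line x y = L)) :
    C.ncard ≤ max ((Fintype.card α - 1) / 2) 4 := by
  have hC : IsLineClass C L := hclass
  rcases C.eq_empty_or_nonempty with rfl | ⟨t, ht⟩
  · simp
  by_cases hpure : ∀ s ∈ C, pairDist s = pairDist t
  · have hL : L ≠ Set.univ := by
      induction t using Sym2.ind with
      | _ x y =>
        obtain ⟨hxy, hxyL⟩ := hC x y |>.mp ht
        exact fun h => hnu ⟨x, y, hxy, hxyL.trans h⟩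
    have hcount := hC.two_mul_ncard_lt_card h12 hnt hL hpure
    rw [Nat.card_eq_fintype_card] at hcount
    exact le_max_of_le_left (by omega)
  · push Not at hpure
    obtain ⟨s, hs, hst⟩ := hpure
    exact (hC.ncard_le_four h12 hnt hs ht hst).trans (le_max_right _ _)
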